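/- arXiv:1009.4471 — 7 statements merged into one kernel-verified Lean document; each statement's English description precedes it below -/
import Mathlib

section
/- For n ≥ 2, the minimum cardinality N(n) of a simply 3-suitable set of permutations of [n] satisfies N(n) ≥ ⌈log₂ log₂ n⌉ + 1. -/
/-- `β(s,t,σ)`: the set of `x` with `σ⁻¹(x)` strictly between `σ⁻¹(s)` and `σ⁻¹(t)`. -/
def beta {n : ℕ} (σ : Equiv.Perm (Fin n)) (s t : Fin n) : Set (Fin n) :=
  {x | (σ.symm s < σ.symm x ∧ σ.symm x < σ.symm t) ∨
       (σ.symm t < σ.symm x ∧ σ.symm x < σ.symm s)}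

/-- A set of permutations of `[n]` is simply 3-suitable if for every pair `s, t`,
the intersection over `σ ∈ S` of `β(s,t,σ)` is empty. -/
def SimplySuitable {n : ℕ} (S : Set (Equiv.Perm (Fin n))) : Prop :=
  ∀ s t : Fin n, ⋂ σ ∈ S, beta σ s t = ∅

/-- `N(n)`: the minimum cardinality of a simply 3-suitable set of permutations of `[n]`. -/
noncomputable def Nsimply (n : ℕ) : ℕ :=
  sInf {k | ∃ S : Finset (Equiv.Perm (Fin n)), S.card = k ∧ SimplySuitable (↑S : Set (Equiv.Perm (Fin n)))}

/-!
Among more than `N ^ 2` points, two linear orders agree or are opposite on some `N + 1` of them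
(Erdős–Szekeres), and on such a set betweenness for one order is betweenness for the other.
So, for permutations `σ₀, …, σₖ` of more than `2 ^ 2 ^ k` points, passing to a set of more than
`2 ^ 2 ^ (k - 1)` points on which `σ₀` and `σ₁` agree or are opposite and inducting on `k` gives
`a, b, m` with `m` strictly between `a` and `b` for every `σᵢ`. A simply 3-suitable family of
`k + 1` permutations of `[n]` therefore has `n ≤ 2 ^ 2 ^ k`.
-/

open Finset Function Order

theorem exists_isChain_or_isAntichain_of_mul_lt_card {γ : Type*} [PartialOrder γ] [Fintype γ]
    {r s : ℕ} (h : r * s < Fintype.card γ) :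
    (∃ C : Finset γ, IsChain (· ≤ ·) (C : Set γ) ∧ r < #C) ∨
      ∃ A : Finset γ, IsAntichain (· ≤ ·) (A : Set γ) ∧ s < #A := by
  by_contra! ⟨hchain, hanti⟩
  -- Mirsky's argument: heights are bounded by the length of chains, and level sets are antichains.
  have height_lt (x : γ) : height x < r := by
    by_contra! hx
    obtain ⟨p, -, hp⟩ := exists_series_of_le_height x hx
    have := hchain (univ.map ⟨p, p.strictMono.injective⟩) <| by
      simpa using p.strictMono.monotone.isChain_range
    simp [hp] at this
  have height_eq (x : γ) : ((height x).toNat : ℕ∞) = height x :=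
    ENat.natCast_toNat_eq_self.mpr ((height_lt x).trans (ENat.natCast_lt_top r)).ne
  obtain ⟨k, -, hk⟩ := exists_lt_card_fiber_of_mul_lt_card_of_maps_to
    (s := univ) (t := range r) (f := fun x => (height x).toNat) (n := s)
    (fun x _ => mem_range.mpr (by exact_mod_cast (height_eq x).trans_lt (height_lt x)))
    (by simpa using h)
  refine hk.not_ge (hanti _ fun x hx y hy hxy hle => ?_)
  simp only [coe_filter, mem_univ, true_and, Set.mem_ofPred_eq] at hx hy
  have := height_strictMono (lt_of_le_of_ne hle hxy) ((height_lt x).trans (ENat.natCast_lt_top r))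
  rw [← height_eq x, ← height_eq y, hx, hy] at this
  exact this.false

theorem exists_concordant_or_discordant_of_mul_lt_card {ι β : Type*} [Fintype ι] [LinearOrder β]
    {f g : ι → β} (hf : Injective f) (hg : Injective g) {r s : ℕ} (h : r * s < Fintype.card ι) :
    (∃ C : Finset ι, r < #C ∧ ∀ x ∈ C, ∀ y ∈ C, f x < f y → g x < g y) ∨
      ∃ C : Finset ι, s < #C ∧ ∀ x ∈ C, ∀ y ∈ C, f x < f y → g y < g x := by
  -- chains and antichains for the product order pulled back along `x ↦ (f x, g x)`
  let _ : PartialOrder ι := PartialOrder.lift (fun x => (f x, g x)) fun _ _ hxy =>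
    hf (congrArg Prod.fst hxy)
  refine (exists_isChain_or_isAntichain_of_mul_lt_card h).imp ?_ ?_
  · rintro ⟨C, hC, hcard⟩
    refine ⟨C, hcard, fun x hx y hy hlt => ?_⟩
    have hxy : x ≠ y := fun hxy => hlt.ne (congrArg f hxy)
    rcases hC hx hy hxy with ⟨-, hle⟩ | ⟨hle, -⟩
    · exact hle.lt_of_ne (hg.ne hxy)
    · exact absurd hlt hle.not_gt
  · rintro ⟨A, hA, hcard⟩
    refine ⟨A, hcard, fun x hx y hy hlt => ?_⟩
    have hxy : x ≠ y := fun hxy => hlt.ne (congrArg f hxy)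
    exact lt_of_not_ge fun hle => hA hx hy hxy ⟨hlt.le, hle⟩

theorem mem_uIoo_of_concordant_or_discordant {ι β γ : Type*} [LinearOrder β] [LinearOrder γ]
    {f : ι → β} {g : ι → γ} {C : Set ι}
    (hfg : (∀ x ∈ C, ∀ y ∈ C, f x < f y → g x < g y) ∨ ∀ x ∈ C, ∀ y ∈ C, f x < f y → g y < g x)
    {a b m : ι} (ha : a ∈ C) (hb : b ∈ C) (hm : m ∈ C) (h : f m ∈ Set.uIoo (f a) (f b)) :
    g m ∈ Set.uIoo (g a) (g b) := by
  rw [Set.uIoo_eq_union] at h ⊢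
  rcases hfg with hfg | hfg <;> rcases h with ⟨h₁, h₂⟩ | ⟨h₁, h₂⟩
  · exact .inl ⟨hfg a ha m hm h₁, hfg m hm b hb h₂⟩
  · exact .inr ⟨hfg b hb m hm h₁, hfg m hm a ha h₂⟩
  · exact .inr ⟨hfg m hm b hb h₂, hfg a ha m hm h₁⟩
  · exact .inl ⟨hfg m hm a ha h₂, hfg b hb m hm h₁⟩

theorem exists_mem_uIoo_of_two_lt_card {ι β : Type*} [Fintype ι] [LinearOrder β] {g : ι → β}
    (hg : Injective g) (h : 2 < Fintype.card ι) : ∃ a b m : ι, g m ∈ Set.uIoo (g a) (g b) := by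
  obtain ⟨x, y, z, hxy, hxz, hyz⟩ := Fintype.two_lt_card_iff.mp h
  rcases (hg.ne hxy).lt_or_gt with hxy | hxy <;> rcases (hg.ne hyz).lt_or_gt with hyz | hyz
  · exact ⟨x, z, y, Set.mem_uIoo_of_lt hxy hyz⟩
  · rcases (hg.ne hxz).lt_or_gt with hxz | hxz
    · exact ⟨x, y, z, Set.mem_uIoo_of_lt hxz hyz⟩
    · exact ⟨z, y, x, Set.mem_uIoo_of_lt hxz hxy⟩
  · rcases (hg.ne hxz).lt_or_gt with hxz | hxz
    · exact ⟨y, z, x, Set.mem_uIoo_of_lt hxy hxz⟩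
    · exact ⟨y, x, z, Set.mem_uIoo_of_lt hyz hxz⟩
  · exact ⟨z, x, y, Set.mem_uIoo_of_lt hyz hxy⟩

theorem exists_forall_mem_uIoo_of_two_pow_two_pow_lt_card {κ β : Type*} [LinearOrder β]
    {S : Finset κ} (hS : S.Nonempty) {ι : Type*} [Fintype ι] {g : κ → ι → β}
    (hg : ∀ i ∈ S, Injective (g i)) (h : 2 ^ 2 ^ (#S - 1) < Fintype.card ι) :
    ∃ a b m : ι, ∀ i ∈ S, g i m ∈ Set.uIoo (g i a) (g i b) := by
  induction hS using Finset.Nonempty.cons_induction generalizing ι with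
  | singleton j =>
    obtain ⟨a, b, m, hm⟩ := exists_mem_uIoo_of_two_lt_card (hg j (mem_singleton_self j)) h
    exact ⟨a, b, m, fun i hi => mem_singleton.mp hi ▸ hm⟩
  | cons j S hj hS ih =>
    obtain ⟨i₀, hi₀⟩ := hS
    have hsq : 2 ^ 2 ^ (#S - 1) * 2 ^ 2 ^ (#S - 1) < Fintype.card ι := by
      rw [card_cons, Nat.add_sub_cancel] at h
      rwa [← pow_add, ← two_mul, ← pow_succ', Nat.sub_add_cancel (card_pos.mpr ⟨i₀, hi₀⟩)]
    obtain ⟨C, hC, hmono⟩ : ∃ C : Finset ι, 2 ^ 2 ^ (#S - 1) < #C ∧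
        ((∀ x ∈ C, ∀ y ∈ C, g i₀ x < g i₀ y → g j x < g j y) ∨
          ∀ x ∈ C, ∀ y ∈ C, g i₀ x < g i₀ y → g j y < g j x) := by
      rcases exists_concordant_or_discordant_of_mul_lt_card (hg i₀ (mem_cons_of_mem hi₀))
        (hg j (mem_cons_self j S)) hsq with ⟨C, hC, hmono⟩ | ⟨C, hC, hanti⟩
      exacts [⟨C, hC, .inl hmono⟩, ⟨C, hC, .inr hanti⟩]
    obtain ⟨a, b, m, hbetween⟩ := ih (ι := C) (g := fun i x => g i x)
      (fun i hi => (hg i (mem_cons_of_mem hi)).comp Subtype.val_injective)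
      (by rwa [Fintype.card_coe])
    refine ⟨a, b, m, fun i hi => ?_⟩
    rcases mem_cons.mp hi with rfl | hi
    · exact mem_uIoo_of_concordant_or_discordant hmono a.2 b.2 m.2 (hbetween i₀ hi₀)
    · exact hbetween i hi

open Equiv

theorem mem_beta_iff {n : ℕ} {σ : Perm (Fin n)} {s t x : Fin n} :
    x ∈ beta σ s t ↔ σ.symm x ∈ Set.uIoo (σ.symm s) (σ.symm t) := by
  simp [beta, Set.uIoo_eq_union]

theorem simplySuitable_univ (n : ℕ) : SimplySuitable (Set.univ : Set (Perm (Fin n))) := by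
  refine fun s t => Set.eq_empty_of_forall_notMem fun x hx => ?_
  -- `swap x 0` puts `x` in the first position, where it is between no two points.
  have hx := mem_beta_iff.mp (Set.mem_iInter₂.mp hx (swap x ⟨0, x.pos⟩) (Set.mem_univ _))
  rw [symm_swap, swap_apply_left] at hx
  exact Nat.not_lt_zero _ hx.1

theorem SimplySuitable.nonempty {n : ℕ} {S : Finset (Perm (Fin n))}
    (hS : SimplySuitable (S : Set (Perm (Fin n)))) (hn : 0 < n) : S.Nonempty := by
  rw [nonempty_iff_ne_empty]
  rintro rfl
  have : IsEmpty (Fin n) := by simpa using hS ⟨0, hn⟩ ⟨0, hn⟩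
  exact this.false ⟨0, hn⟩

theorem SimplySuitable.le_two_pow_two_pow {n : ℕ} {S : Finset (Perm (Fin n))}
    (hS : SimplySuitable (S : Set (Perm (Fin n)))) (hne : S.Nonempty) : n ≤ 2 ^ 2 ^ (#S - 1) := by
  by_contra! h
  obtain ⟨a, b, m, hm⟩ := exists_forall_mem_uIoo_of_two_pow_two_pow_lt_card hne
    (g := fun σ => σ.symm) (fun σ _ => σ.symm.injective) (by rwa [Fintype.card_fin])
  have : m ∈ ⋂ σ ∈ (S : Set (Perm (Fin n))), beta σ a b :=
    Set.mem_iInter₂.mpr fun σ hσ => mem_beta_iff.mpr (hm σ hσ)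
  rwa [hS a b] at this

/-- For `n ≥ 2`, `N(n) ≥ ⌈log₂ log₂ n⌉ + 1`. -/
theorem Nsimply_lower_bound (n : ℕ) (hn : 2 ≤ n) :
    Nat.clog 2 (Nat.clog 2 n) + 1 ≤ Nsimply n := by
  refine le_csInf ⟨_, univ, rfl, by simpa using simplySuitable_univ n⟩ ?_
  rintro _ ⟨S, rfl, hS⟩
  have hne := hS.nonempty (by omega)
  have h₁ : Nat.clog 2 n ≤ 2 ^ (#S - 1) :=
    (Nat.clog_le_iff_le_pow one_lt_two).mpr (hS.le_two_pow_two_pow hne)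
  have h₂ : Nat.clog 2 (Nat.clog 2 n) ≤ #S - 1 := (Nat.clog_le_iff_le_pow one_lt_two).mpr h₁
  have := hne.card_pos
  omega
end

section
/- For n ≥ 2, the minimum cardinality N(n) of a simply 3-suitable set of permutations of [n] satisfies N(n) ≤ ⌈log₂ log₂ n⌉ + 1; in particular there exists a simply 3-suitable set of permutations of [n] of size ⌈log₂ log₂ n⌉ + 1. -/
/-! If the strict orders `L₀, …, Lₘ` on `A` and `M₀, …, Mₘ` on `B` are simply suitable (no `x`
lies strictly between `s` and `t` in all of them), then so are the `m + 2` lexicographic orders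
`Lᵢ ×ₗ Mᵢ` and `L₀ ×ₗ M₀ᵒᵈ` on `A × B`. Indeed, for a triple `s, t, x`: if `s` and `t` share
their first coordinate, some `Mᵢ` separates the second coordinates; if `x` shares its first
coordinate with exactly one of `s`, `t`, the two orders built from `L₀` put `x` on opposite
sides of it; otherwise some `Lᵢ` separates the first coordinates. Starting from the order of a two-point set,
`k` squarings give `k + 1` orders on `2 ^ 2 ^ k` points, which restrict to `[n]` once
`n ≤ 2 ^ 2 ^ k`; extra permutations can always be added. -/

open Function
open scoped Nat

section Orders

variable {α β : Type*}

def IsBetween (r : α → α → Prop) (s t x : α) : Prop :=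
  r s x ∧ r x t ∨ r t x ∧ r x s

theorem isBetween_comm {r : α → α → Prop} {s t x : α} :
    IsBetween r s t x ↔ IsBetween r t s x :=
  or_comm

/-- The order-theoretic form of `SimplySuitable`: a permutation `σ` stands for the order
`σ.symm x < σ.symm y`. -/
def HasSimplySuitableOrders (α : Type*) (m : ℕ) : Prop :=
  ∃ r : Fin m → α → α → Prop, (∀ i, IsStrictTotalOrder α (r i)) ∧
    ∀ s t x : α, ∃ i, ¬ IsBetween (r i) s t x

instance Prod.Lex.isStrictTotalOrder {r : α → α → Prop} {r' : β → β → Prop}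
    [IsStrictTotalOrder α r] [IsStrictTotalOrder β r'] :
    IsStrictTotalOrder (α × β) (Prod.Lex r r') where

section Lex

variable {r : α → α → Prop} {r' : β → β → Prop} {s t x : α × β}

theorem IsBetween.snd_of_lex [Std.Asymm r] (hst : s.1 = t.1)
    (h : IsBetween (Prod.Lex r r') s t x) : IsBetween r' s.2 t.2 x.2 := by
  simp only [IsBetween, Prod.lex_def, hst] at h ⊢
  have : ∀ a b, r a b → ¬ r b a := Std.Asymm.asymm
  grind

theorem IsBetween.fst_of_lex (hxs : x.1 ≠ s.1) (hxt : x.1 ≠ t.1)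
    (h : IsBetween (Prod.Lex r r') s t x) : IsBetween r s.1 t.1 x.1 := by
  simp only [IsBetween, Prod.lex_def] at h ⊢
  grind

theorem not_isBetween_lex_swap_of_isBetween_lex [Std.Asymm r] [Std.Asymm r'] (hst : s.1 ≠ t.1)
    (hxs : x.1 = s.1) (h : IsBetween (Prod.Lex r r') s t x) :
    ¬ IsBetween (Prod.Lex r (swap r')) s t x := by
  simp only [IsBetween, Prod.lex_def, swap, hxs, irrefl_of, false_or, true_and] at h ⊢
  have : ∀ a b, r a b → ¬ r b a := Std.Asymm.asymm
  have : ∀ a b, r' a b → ¬ r' b a := Std.Asymm.asymm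
  grind

end Lex

namespace HasSimplySuitableOrders

variable {m : ℕ}

theorem of_embedding (f : α ↪ β) (h : HasSimplySuitableOrders β m) :
    HasSimplySuitableOrders α m := by
  obtain ⟨r, hr, hsep⟩ := h
  refine ⟨fun i => f ⁻¹'o r i, fun i => ?_, fun s t x => hsep (f s) (f t) (f x)⟩
  have := hr i
  exact (RelEmbedding.preimage f (r i)).isStrictTotalOrder

theorem prod (hα : HasSimplySuitableOrders α (m + 1)) (hβ : HasSimplySuitableOrders β (m + 1)) :
    HasSimplySuitableOrders (α × β) (m + 2) := by
  obtain ⟨r, hr, hsepα⟩ := hα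
  obtain ⟨r', hr', hsepβ⟩ := hβ
  refine ⟨Fin.cons (Prod.Lex (r 0) (swap (r' 0))) fun i => Prod.Lex (r i) (r' i), ?_, ?_⟩
  · intro i
    cases i using Fin.cases with
    | zero => have := hr 0; have := hr' 0; rw [Fin.cons_zero]; infer_instance
    | succ i => have := hr i; have := hr' i; rw [Fin.cons_succ]; infer_instance
  · intro s t x
    by_contra! hall
    have hlex (i : Fin (m + 1)) : IsBetween (Prod.Lex (r i) (r' i)) s t x := by
      simpa using hall i.succ
    have hswap : IsBetween (Prod.Lex (r 0) (swap (r' 0))) s t x := by simpa using hall 0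
    have := hr 0; have := hr' 0
    by_cases hst : s.1 = t.1
    · obtain ⟨i, hi⟩ := hsepβ s.2 t.2 x.2
      have := hr i
      exact hi ((hlex i).snd_of_lex hst)
    by_cases hxs : x.1 = s.1
    · exact not_isBetween_lex_swap_of_isBetween_lex hst hxs (hlex 0) hswap
    by_cases hxt : x.1 = t.1
    · exact not_isBetween_lex_swap_of_isBetween_lex (Ne.symm hst) hxt
        (isBetween_comm.1 (hlex 0)) (isBetween_comm.1 hswap)
    obtain ⟨i, hi⟩ := hsepα s.1 t.1 x.1
    exact hi ((hlex i).fst_of_lex hxs hxt)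

end HasSimplySuitableOrders

theorem hasSimplySuitableOrders_fin_two : HasSimplySuitableOrders (Fin 2) 1 :=
  ⟨fun _ => (· < ·), fun _ => inferInstance, fun s t x => ⟨0, by unfold IsBetween; omega⟩⟩

theorem hasSimplySuitableOrders_fin_two_pow_two_pow (k : ℕ) :
    HasSimplySuitableOrders (Fin (2 ^ 2 ^ k)) (k + 1) := by
  induction k with
  | zero => simpa using hasSimplySuitableOrders_fin_two
  | succ k ih =>
    rw [pow_succ, pow_mul, sq]
    exact (ih.prod ih).of_embedding finProdFinEquiv.symm.toEmbedding

end Orders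

theorem exists_equiv_fin_lt_iff {α : Type*} [Fintype α] {n : ℕ} (hn : Fintype.card α = n)
    (r : α → α → Prop) [IsStrictTotalOrder α r] :
    ∃ e : α ≃ Fin n, ∀ x y, e x < e y ↔ r x y := by
  classical
  let := linearOrderOfSTO r
  exact ⟨(Fintype.orderIsoFinOfCardEq α hn).symm.toEquiv,
    fun _ _ => (Fintype.orderIsoFinOfCardEq α hn).symm.lt_iff_lt⟩

theorem SimplySuitable.mono {n : ℕ} {S T : Set (Equiv.Perm (Fin n))} (hST : S ⊆ T)
    (hS : SimplySuitable S) : SimplySuitable T := fun s t =>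
  Set.subset_eq_empty (Set.biInter_subset_biInter_left hST) (hS s t)

theorem SimplySuitable.exists_card_eq {n m : ℕ} {S : Finset (Equiv.Perm (Fin n))}
    (hS : SimplySuitable (S : Set (Equiv.Perm (Fin n)))) (hSm : S.card ≤ m) (hm : m ≤ n !) :
    ∃ T : Finset (Equiv.Perm (Fin n)), T.card = m ∧
      SimplySuitable (T : Set (Equiv.Perm (Fin n))) := by
  obtain ⟨T, hST, hT⟩ :=
    Finset.exists_superset_card_eq hSm (by rwa [Fintype.card_perm, Fintype.card_fin])
  exact ⟨T, hT, hS.mono hST⟩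

theorem HasSimplySuitableOrders.exists_simplySuitable {n m : ℕ}
    (h : HasSimplySuitableOrders (Fin n) m) :
    ∃ S : Finset (Equiv.Perm (Fin n)), S.card ≤ m ∧
      SimplySuitable (S : Set (Equiv.Perm (Fin n))) := by
  classical
  obtain ⟨r, hr, hsep⟩ := h
  choose e he using fun i => exists_equiv_fin_lt_iff (Fintype.card_fin n) (r i)
  refine ⟨Finset.univ.image fun i => (e i).symm, Finset.card_image_le.trans (by simp), ?_⟩
  intro s t
  refine Set.eq_empty_of_forall_notMem fun x hx => ?_
  obtain ⟨i, hi⟩ := hsep s t x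
  have hmem := Set.mem_iInter₂.1 hx (e i).symm (by simp)
  simp only [beta, Set.mem_ofPred_eq, Equiv.symm_symm, he] at hmem
  exact hi hmem

theorem le_two_pow_two_pow_clog_clog (n : ℕ) : n ≤ 2 ^ 2 ^ Nat.clog 2 (Nat.clog 2 n) :=
  (Nat.le_pow_clog one_lt_two n).trans <|
    Nat.pow_le_pow_right two_pos (Nat.le_pow_clog one_lt_two _)

theorem clog_clog_lt_factorial (n : ℕ) : Nat.clog 2 (Nat.clog 2 n) < n ! := by
  have hn : Nat.clog 2 n ≤ n - 1 :=
    Nat.clog_le_of_le_pow (by have := Nat.lt_two_pow_self (n := n - 1); omega)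
  have hclog : Nat.clog 2 (Nat.clog 2 n) ≤ Nat.clog 2 n :=
    Nat.clog_le_of_le_pow Nat.lt_two_pow_self.le
  have := Nat.self_le_factorial n
  have := Nat.factorial_pos n
  omega

theorem Nsimply_upper_bound_general (n : ℕ) :
    Nsimply n ≤ Nat.clog 2 (Nat.clog 2 n) + 1 ∧
      ∃ S : Finset (Equiv.Perm (Fin n)), S.card = Nat.clog 2 (Nat.clog 2 n) + 1 ∧
        SimplySuitable (↑S : Set (Equiv.Perm (Fin n))) := by
  set k := Nat.clog 2 (Nat.clog 2 n)
  have hn : HasSimplySuitableOrders (Fin n) (k + 1) :=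
    (hasSimplySuitableOrders_fin_two_pow_two_pow k).of_embedding
      (Fin.castLEEmb (le_two_pow_two_pow_clog_clog n))
  obtain ⟨S₀, hS₀card, hS₀⟩ := hn.exists_simplySuitable
  obtain ⟨S, hScard, hS⟩ := hS₀.exists_card_eq hS₀card (clog_clog_lt_factorial n)
  exact ⟨Nat.sInf_le ⟨S, hScard, hS⟩, S, hScard, hS⟩

/-- For `n ≥ 2`, `N(n) ≤ ⌈log₂ log₂ n⌉ + 1`; in particular there is a simply 3-suitable
set of permutations of `[n]` of exactly this size. -/
theorem Nsimply_upper_bound (n : ℕ) (hn : 2 ≤ n) :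
    Nsimply n ≤ Nat.clog 2 (Nat.clog 2 n) + 1 ∧
      ∃ S : Finset (Equiv.Perm (Fin n)), S.card = Nat.clog 2 (Nat.clog 2 n) + 1 ∧
        SimplySuitable (↑S : Set (Equiv.Perm (Fin n))) :=
  Nsimply_upper_bound_general n
end

section
/- Let G be the graph obtained by subdividing every edge of the complete graph K_n exactly once (the full subdivision of K_n), n ≥ 2. Then box(G) ≤ ⌈log₂ log₂ n⌉ + 2. -/
def SimpleGraph.HasBoxRep {V : Type*} (G : SimpleGraph V) (k : ℕ) : Prop :=
  ∃ l r : V → Fin k → ℝ, (∀ v i, l v i ≤ r v i) ∧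
    ∀ u v : V, u ≠ v →
      (G.Adj u v ↔ ∀ i, max (l u i) (l v i) ≤ min (r u i) (r v i))

noncomputable def SimpleGraph.boxicity {V : Type*} (G : SimpleGraph V) : ℕ :=
  sInf {k | G.HasBoxRep k}

def fullSubdivision {V : Type*} (H : SimpleGraph V) : SimpleGraph (V ⊕ H.edgeSet) :=
  SimpleGraph.fromRel (fun a b =>
    match a, b with
    | Sum.inl v, Sum.inr e => v ∈ (e : Sym2 V)
    | _, _ => False)

/-!
Number the vertices of `K_n` by naturals below `2 ^ 2 ^ k`. For `j ≤ k` order them by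
`v ↦ v ^^^ M j`, where bit `p` of the mask `M j` is bit `j` of `p` (so `M k = 0`). Under such an
order, `u` and `x` compare according to `u_p ^^ (M j)_p`, with `p` the highest bit where they
differ. Given `u ∉ {x, y}` with highest differences at `p` and `q`, either `u_p = u_q` (take
`j = k`) or `p ≠ q` and some bit `j < k` of `p` and `q` differs; either way `u` lies on the same
side of `x` and `y`. So in `k + 1` coordinates an original vertex becomes a point and a
subdivision vertex `xy` the interval spanned by `x` and `y`; a last coordinate puts the
subdivision vertices at distinct points and every original vertex on an interval covering all of
them.
-/

open Set Function

theorem Bool.xor_eq_xor_of_ne_of_ne {a b c d : Bool} (hab : a ≠ b) (hcd : c ≠ d) :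
    (a ^^ c) = (b ^^ d) := by
  cases a <;> cases b <;> cases c <;> cases d <;> simp_all

namespace Nat

open Finset

theorem testBit_sum_two_pow (s : Finset ℕ) (j : ℕ) : (∑ i ∈ s, 2 ^ i).testBit j ↔ j ∈ s := by
  rw [← mem_bitIndices, ← List.mem_toFinset, toFinset_bitIndices_sum_two_pow]

def indexBitMask (m i : ℕ) : ℕ := ∑ p ∈ (range m).filter (·.testBit i), 2 ^ p

theorem testBit_indexBitMask {m i p : ℕ} (hp : p < m) :
    (indexBitMask m i).testBit p = p.testBit i := by
  rw [Bool.eq_iff_iff, indexBitMask, testBit_sum_two_pow]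
  simp [hp]

theorem lt_iff_testBit_log2_xor {a b : ℕ} (h : a ≠ b) :
    a < b ↔ a.testBit (a ^^^ b).log2 = false := by
  set p := (a ^^^ b).log2
  have htop : a.testBit p ≠ b.testBit p := by
    simpa [testBit_xor] using testBit_log2 (xor_eq_zero_iff.not.mpr h)
  have hhigh : ∀ j, p < j → a.testBit j = b.testBit j := fun j hj => by
    have := testBit_lt_two_pow (lt_log2_self.trans_le (Nat.pow_le_pow_right two_pos hj))
    simpa [testBit_xor] using this
  cases ha : a.testBit p
  · have hb : b.testBit p = true := by simpa [ha] using htop.symm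
    simp [lt_of_testBit p ha hb hhigh]
  · have hb : b.testBit p = false := by simpa [ha] using htop.symm
    simp [(lt_of_testBit p hb ha fun j hj => (hhigh j hj).symm).not_gt]

theorem xor_lt_xor_iff {a b : ℕ} (M : ℕ) (h : a ≠ b) :
    a ^^^ M < b ^^^ M ↔ (a.testBit (a ^^^ b).log2 ^^ M.testBit (a ^^^ b).log2) = false := by
  have hM : a ^^^ M ≠ b ^^^ M := (xor_left_involutive M).injective.ne h
  rw [lt_iff_testBit_log2_xor hM, xor_assoc, xor_xor_cancel_comm_assoc, testBit_xor]

theorem exists_testBit_ne_lt_of_ne {k p q : ℕ} (hp : p < 2 ^ k) (hq : q < 2 ^ k) (h : p ≠ q) :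
    ∃ i < k, p.testBit i ≠ q.testBit i := by
  obtain ⟨i, hi⟩ := exists_testBit_ne_of_ne h
  refine ⟨i, lt_of_not_ge fun hki => hi ?_, hi⟩
  have hk : 2 ^ k ≤ 2 ^ i := Nat.pow_le_pow_right two_pos hki
  rw [testBit_lt_two_pow (hp.trans_le hk), testBit_lt_two_pow (hq.trans_le hk)]

theorem exists_xor_indexBitMask_notMem_uIcc {k u x y : ℕ} (hu : u < 2 ^ 2 ^ k)
    (hx : x < 2 ^ 2 ^ k) (hy : y < 2 ^ 2 ^ k) (hux : u ≠ x) (huy : u ≠ y) :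
    ∃ j ≤ k, u ^^^ indexBitMask (2 ^ k) j ∉
      Set.uIcc (x ^^^ indexBitMask (2 ^ k) j) (y ^^^ indexBitMask (2 ^ k) j) := by
  set p := (u ^^^ x).log2
  set q := (u ^^^ y).log2
  have hp : p < 2 ^ k := (log2_lt (xor_eq_zero_iff.not.mpr hux)).2 (xor_lt_two_pow hu hx)
  have hq : q < 2 ^ k := (log2_lt (xor_eq_zero_iff.not.mpr huy)).2 (xor_lt_two_pow hu hy)
  obtain ⟨j, hjk, hj⟩ : ∃ j ≤ k, (u.testBit p ^^ p.testBit j) = (u.testBit q ^^ q.testBit j) := by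
    by_cases hpq : u.testBit p = u.testBit q
    · exact ⟨k, le_rfl, by rw [hpq, testBit_lt_two_pow hp, testBit_lt_two_pow hq]⟩
    · obtain ⟨i, hik, hi⟩ := exists_testBit_ne_lt_of_ne hp hq fun h => hpq (congrArg _ h)
      exact ⟨i, hik.le, Bool.xor_eq_xor_of_ne_of_ne hpq hi⟩
  refine ⟨j, hjk, ?_⟩
  set M := indexBitMask (2 ^ k) j
  have hx_cmp := xor_lt_xor_iff M hux
  have hy_cmp := xor_lt_xor_iff M huy
  rw [testBit_indexBitMask hp] at hx_cmp
  rw [testBit_indexBitMask hq, ← hj] at hy_cmp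
  have hxM : u ^^^ M ≠ x ^^^ M := (xor_left_involutive M).injective.ne hux
  have hyM : u ^^^ M ≠ y ^^^ M := (xor_left_involutive M).injective.ne huy
  have hsame := hx_cmp.trans hy_cmp.symm
  rw [Set.mem_uIcc]
  omega

end Nat

theorem max_le_min_iff_mem_Icc {α : Type*} [LinearOrder α] {a l r : α} :
    max a l ≤ min a r ↔ a ∈ Icc l r := by
  simp only [max_le_iff, le_min_iff, mem_Icc]
  grind

namespace SimpleGraph

variable {V : Type*} {H : SimpleGraph V}

@[simp]
theorem fullSubdivision_adj_inl_inr {a : V} {e : H.edgeSet} :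
    (fullSubdivision H).Adj (.inl a) (.inr e) ↔ a ∈ (e : Sym2 V) := by
  simp [fullSubdivision]

@[simp]
theorem fullSubdivision_not_adj_inl_inl (a b : V) :
    ¬ (fullSubdivision H).Adj (.inl a) (.inl b) := by
  simp [fullSubdivision]

@[simp]
theorem fullSubdivision_not_adj_inr_inr (e f : H.edgeSet) :
    ¬ (fullSubdivision H).Adj (.inr e) (.inr f) := by
  simp [fullSubdivision]

theorem mem_edge_iff_forall_mem_Icc {ι : Type*} {σ : ι → V → ℝ}
    (hsep : ∀ a x y, H.Adj x y → a ≠ x → a ≠ y → ∃ j, σ j a ∉ uIcc (σ j x) (σ j y))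
    {a : V} {e : Sym2 V} (he : e ∈ H.edgeSet) :
    a ∈ e ↔ ∀ j, σ j a ∈ Icc (e.map (σ j)).inf (e.map (σ j)).sup := by
  induction e using Sym2.ind with | _ x y =>
  simp only [Sym2.map_mk, Sym2.inf_mk, Sym2.sup_mk, Sym2.mem_iff, ← uIcc.eq_def]
  refine ⟨?_, fun h => ?_⟩
  · rintro (rfl | rfl) j
    exacts [left_mem_uIcc, right_mem_uIcc]
  · by_contra! ⟨hax, hay⟩
    obtain ⟨j, hj⟩ := hsep a x y he hax hay
    exact hj (h j)

theorem hasBoxRep_fullSubdivision_of_separating [Finite H.edgeSet] {m : ℕ} (σ : Fin m → V → ℝ)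
    (hV : Pairwise fun a b => ∃ j, σ j a ≠ σ j b)
    (hE : ∀ a x y, H.Adj x y → a ≠ x → a ≠ y → ∃ j, σ j a ∉ uIcc (σ j x) (σ j y)) :
    (fullSubdivision H).HasBoxRep (m + 1) := by
  classical
  have := Fintype.ofFinite H.edgeSet
  let φ (e : H.edgeSet) : ℝ := Fintype.equivFin H.edgeSet e
  let C : ℝ := Fintype.card H.edgeSet
  let l : V ⊕ H.edgeSet → Fin (m + 1) → ℝ
    | .inl v => Fin.snoc (σ · v) 0
    | .inr e => Fin.snoc (fun j => ((e : Sym2 V).map (σ j)).inf) (φ e)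
  let r : V ⊕ H.edgeSet → Fin (m + 1) → ℝ
    | .inl v => Fin.snoc (σ · v) C
    | .inr e => Fin.snoc (fun j => ((e : Sym2 V).map (σ j)).sup) (φ e)
  have hvert_edge (a e) : (fullSubdivision H).Adj (.inl a) (.inr e) ↔
      ∀ i, max (l (.inl a) i) (l (.inr e) i) ≤ min (r (.inl a) i) (r (.inr e) i) := by
    simp only [fullSubdivision_adj_inl_inr, Fin.forall_fin_succ', l, r, Fin.snoc_castSucc,
      Fin.snoc_last, max_le_min_iff_mem_Icc, mem_edge_iff_forall_mem_Icc hE e.2]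
    have hlast : max 0 (φ e) ≤ min C (φ e) := by
      rw [max_comm, min_comm, max_le_min_iff_mem_Icc]
      exact ⟨Nat.cast_nonneg _, Nat.cast_le.2 (Fintype.equivFin H.edgeSet e).isLt.le⟩
    exact (and_iff_left hlast).symm
  refine ⟨l, r, ?_, ?_⟩
  · rintro (v | e) i <;> induction i using Fin.lastCases
    all_goals simp [l, r, Sym2.inf_le_sup, C]
  · rintro (a | e) (b | f) hne
    · obtain ⟨j, hj⟩ := hV fun h => hne (congrArg _ h)
      simp only [fullSubdivision_not_adj_inl_inl, false_iff]
      exact fun h => hj (sup_le_inf.1 (by simpa [l, r] using h j.castSucc))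
    · exact hvert_edge a f
    · rw [adj_comm, hvert_edge]
      simp only [max_comm, min_comm]
    · have hφinj : Injective φ :=
        Nat.cast_injective.comp (Fin.val_injective.comp (Fintype.equivFin _).injective)
      have hef : φ e ≠ φ f := hφinj.ne fun h => hne (congrArg _ h)
      simp only [fullSubdivision_not_adj_inr_inr, false_iff]
      exact fun h => hef (sup_le_inf.1 (by simpa [l, r] using h (Fin.last m)))

end SimpleGraph

theorem boxicity_fullSubdivision_complete_upper_general (n : ℕ) :
    (fullSubdivision (⊤ : SimpleGraph (Fin n))).boxicity ≤
      Nat.clog 2 (Nat.clog 2 n) + 2 := by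
  set k := Nat.clog 2 (Nat.clog 2 n)
  have hn : n ≤ 2 ^ 2 ^ k := (Nat.le_pow_clog one_lt_two n).trans
    (Nat.pow_le_pow_right two_pos (Nat.le_pow_clog one_lt_two _))
  let σ (j : Fin (k + 1)) (v : Fin n) : ℝ := ((v : ℕ) ^^^ Nat.indexBitMask (2 ^ k) j : ℕ)
  have hσ (j) : Injective (σ j) :=
    Nat.cast_injective.comp ((xor_left_involutive _).injective.comp Fin.val_injective)
  refine Nat.sInf_le (SimpleGraph.hasBoxRep_fullSubdivision_of_separating σ
    (fun a b hab => ⟨0, (hσ 0).ne hab⟩) fun a x y _ hax hay => ?_)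
  obtain ⟨j, hjk, hj⟩ := Nat.exists_xor_indexBitMask_notMem_uIcc (a.2.trans_le hn)
    (x.2.trans_le hn) (y.2.trans_le hn) (Fin.val_ne_of_ne hax) (Fin.val_ne_of_ne hay)
  refine ⟨⟨j, Nat.lt_succ_of_le hjk⟩, ?_⟩
  simpa [σ, mem_uIcc] using hj

/-- The full subdivision of the complete graph `K_n` has boxicity at most
`⌈log₂ log₂ n⌉ + 2`. -/
theorem boxicity_fullSubdivision_complete_upper (n : ℕ) (hn : 2 ≤ n) :
    (fullSubdivision (⊤ : SimpleGraph (Fin n))).boxicity ≤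
      Nat.clog 2 (Nat.clog 2 n) + 2 :=
  boxicity_fullSubdivision_complete_upper_general n
end

section
/- Let G be the graph obtained by subdividing every edge of the complete graph K_n exactly once, n ≥ 2. Then box(G) ≥ (⌈log₂ log₂ n⌉ + 1)/2. -/
/-!
In a box representation of the full subdivision of `K_n`, take three distinct
branch vertices `a, b, c`. The subdivision vertex of `bc` meets the boxes of `b` and `c` but not
that of `a`, so in some coordinate the interval of `a` lies strictly to one side of it, hence
strictly to the same side of the intervals of `b` and `c`. Thus the `2k` functions
"right endpoint in coordinate `i`" and "minus left endpoint in coordinate `i`" form a family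
in which every point of a triple is strictly below the other two in some member. Such a family
of `d` functions on a set of size `n` forces `n ≤ 2 ^ 2 ^ (d - 1)`: fixing one function `f₀`,
record for each `u` the set of patterns `{j | f j u < f j v}` over the `v` above `u` for `f₀`;
this map is injective.
-/

open Function

section SuitableFamily

variable {ι α β : Type*} [Fintype ι] [Fintype α] [LinearOrder β]

theorem card_le_two_pow_two_pow_of_injective_of_forall_exists_lt_lt (f : ι → α → β) (j₀ : ι)
    (hinj : Injective (f j₀))
    (hP : ∀ a b c, a ≠ b → a ≠ c → b ≠ c → ∃ j, f j a < f j b ∧ f j a < f j c) :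
    Fintype.card α ≤ 2 ^ 2 ^ (Fintype.card ι - 1) := by
  classical
  let pattern (u v : α) : Set {j // j ≠ j₀} := {j | f j u < f j v}
  let signature (u : α) : Set (Set {j // j ≠ j₀}) :=
    {S | ∃ v, f j₀ u < f j₀ v ∧ S = pattern u v}
  have hsig : ∀ u v, f j₀ u < f j₀ v → signature u ≠ signature v := by
    intro u v huv heq
    obtain ⟨w, hvw, hS⟩ : pattern u v ∈ signature v := heq ▸ ⟨v, huv, rfl⟩
    obtain ⟨j, hvu, hvw'⟩ := hP v u w (ne_of_apply_ne _ huv.ne')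
      (ne_of_apply_ne _ hvw.ne) (ne_of_apply_ne _ (huv.trans hvw).ne)
    by_cases hj : j = j₀
    · subst hj
      exact lt_asymm huv hvu
    · have : ⟨j, hj⟩ ∈ pattern u v := hS ▸ hvw'
      exact lt_asymm this hvu
  have hsig_inj : Injective signature := by
    intro u v h
    by_contra hne
    rcases lt_or_gt_of_ne (hinj.ne hne) with huv | hvu
    · exact hsig u v huv h
    · exact hsig v u hvu h.symm
  simpa [Fintype.card_set] using Fintype.card_le_of_injective signature hsig_inj

theorem card_le_two_pow_two_pow_of_forall_exists_lt_lt (f : ι → α → β)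
    (hP : ∀ a b c, a ≠ b → a ≠ c → b ≠ c → ∃ j, f j a < f j b ∧ f j a < f j c) :
    Fintype.card α ≤ 2 ^ 2 ^ (Fintype.card ι - 1) := by
  rcases isEmpty_or_nonempty ι with hι | ⟨⟨j₀⟩⟩
  · by_contra h
    obtain ⟨a, b, c, hab, hac, hbc⟩ := Fintype.two_lt_card_iff.mp (by simpa using h)
    exact isEmptyElim (hP a b c hab hac hbc).choose
  · let e := Fintype.equivFin α
    let g (j : ι) (a : α) : β ×ₗ Fin (Fintype.card α) := toLex (f j a, e a)
    refine card_le_two_pow_two_pow_of_injective_of_forall_exists_lt_lt g j₀ ?_ ?_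
    · intro a b hab
      exact e.injective (congrArg (·.2) (toLex.injective hab))
    · intro a b c hab hac hbc
      obtain ⟨j, hb, hc⟩ := hP a b c hab hac hbc
      exact ⟨j, Prod.Lex.toLex_lt_toLex.mpr (Or.inl hb),
        Prod.Lex.toLex_lt_toLex.mpr (Or.inl hc)⟩

end SuitableFamily

namespace SimpleGraph

variable {V : Type*} {G : SimpleGraph V} {k : ℕ}

theorem exists_hasBoxRep [Finite V] (G : SimpleGraph V) : ∃ k, G.HasBoxRep k := by
  classical
  cases nonempty_fintype V
  -- coordinate `(a, b)` separates `a` (on `[0, 1]`) from `b` (on `[2, 3]`) when `ab` is a non-edge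
  let L (v : V) (p : V × V) : ℝ := if v = p.2 ∧ v ≠ p.1 ∧ ¬ G.Adj p.1 p.2 then 2 else 0
  let R (v : V) (p : V × V) : ℝ := if v = p.1 ∧ ¬ G.Adj p.1 p.2 then 1 else 3
  let e := (Fintype.equivFin (V × V)).symm
  refine ⟨_, fun v i => L v (e i), fun v i => R v (e i), fun v i => ?_, fun u v huv => ?_⟩
  · simp only [L, R]
    split_ifs <;> grind
  · constructor
    · intro hadj i
      simp only [L, R]
      split_ifs <;> grind [G.adj_symm]
    · intro h
      by_contra hnadj
      have := h (e.symm (u, v))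
      simp only [L, R, Equiv.apply_symm_apply] at this
      grind

theorem hasBoxRep_boxicity [Finite V] (G : SimpleGraph V) : G.HasBoxRep G.boxicity :=
  Nat.sInf_mem (exists_hasBoxRep G)

theorem HasBoxRep.pos_of_not_adj (h : G.HasBoxRep k) {u v : V} (huv : u ≠ v)
    (hnadj : ¬ G.Adj u v) : 0 < k := by
  obtain ⟨l, r, -, hG⟩ := h
  rcases Nat.eq_zero_or_pos k with rfl | hk
  · exact absurd ((hG u v huv).mpr finZeroElim) hnadj
  · exact hk

theorem exists_coord_lt_lt_or_lt_lt {l r : V → Fin k → ℝ} (hlr : ∀ v i, l v i ≤ r v i)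
    (hG : ∀ u v, u ≠ v → (G.Adj u v ↔ ∀ i, max (l u i) (l v i) ≤ min (r u i) (r v i)))
    {x y z w : V} (hx : G.Adj x w) (hy : G.Adj y w) (hzw : z ≠ w) (hz : ¬ G.Adj z w) :
    ∃ i, (r z i < r x i ∧ r z i < r y i) ∨ (l x i < l z i ∧ l y i < l z i) := by
  have hx' := (hG x w hx.ne).mp hx
  have hy' := (hG y w hy.ne).mp hy
  obtain ⟨i, hi⟩ : ∃ i, ¬ max (l z i) (l w i) ≤ min (r z i) (r w i) := by
    simpa using mt (hG z w hzw).mpr hz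
  refine ⟨i, ?_⟩
  have := hlr z i
  have := hlr w i
  simp only [max_le_iff, le_min_iff] at hi hx' hy'
  grind

end SimpleGraph

section FullSubdivision

variable {V : Type*} {H : SimpleGraph V}

theorem fullSubdivision_adj_inl_inr {v : V} {e : H.edgeSet} :
    (fullSubdivision H).Adj (.inl v) (.inr e) ↔ v ∈ (e : Sym2 V) := by
  simp [fullSubdivision]

theorem not_fullSubdivision_adj_inl_inl {u v : V} :
    ¬ (fullSubdivision H).Adj (.inl u) (.inl v) := by
  simp [fullSubdivision]

theorem card_le_of_hasBoxRep_fullSubdivision_top [Fintype V] {k : ℕ}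
    (h : (fullSubdivision (⊤ : SimpleGraph V)).HasBoxRep k) :
    Fintype.card V ≤ 2 ^ 2 ^ (2 * k - 1) := by
  obtain ⟨l, r, hlr, hG⟩ := h
  let f : Fin k ⊕ Fin k → V → ℝ :=
    Sum.elim (fun i x => r (.inl x) i) (fun i x => -l (.inl x) i)
  have hP : ∀ a b c, a ≠ b → a ≠ c → b ≠ c → ∃ j, f j a < f j b ∧ f j a < f j c := by
    intro a b c hab hac hbc
    let e : (⊤ : SimpleGraph V).edgeSet := ⟨s(b, c), by simpa using hbc⟩
    obtain ⟨i, hi | hi⟩ := SimpleGraph.exists_coord_lt_lt_or_lt_lt hlr hG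
      (x := .inl b) (y := .inl c) (z := .inl a) (w := .inr e)
      (fullSubdivision_adj_inl_inr.mpr (Sym2.mem_mk_left b c))
      (fullSubdivision_adj_inl_inr.mpr (Sym2.mem_mk_right b c)) Sum.inl_ne_inr
      (by simp [fullSubdivision_adj_inl_inr, e, hab, hac])
    · exact ⟨.inl i, hi⟩
    · exact ⟨.inr i, neg_lt_neg hi.1, neg_lt_neg hi.2⟩
  simpa [two_mul] using card_le_two_pow_two_pow_of_forall_exists_lt_lt f hP

end FullSubdivision

/-- The full subdivision of the complete graph `K_n` has boxicity at least
`(⌈log₂ log₂ n⌉ + 1)/2`. -/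
theorem boxicity_fullSubdivision_complete_lower (n : ℕ) (hn : 2 ≤ n) :
    ((Nat.clog 2 (Nat.clog 2 n) + 1 : ℕ) : ℝ) / 2 ≤
      ((fullSubdivision (⊤ : SimpleGraph (Fin n))).boxicity : ℝ) := by
  set G := fullSubdivision (⊤ : SimpleGraph (Fin n))
  have hrep : G.HasBoxRep G.boxicity := G.hasBoxRep_boxicity
  have hpos : 0 < G.boxicity :=
    hrep.pos_of_not_adj (u := .inl ⟨0, by omega⟩) (v := .inl ⟨1, by omega⟩) (by simp)
      not_fullSubdivision_adj_inl_inl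
  have hcard : n ≤ 2 ^ 2 ^ (2 * G.boxicity - 1) := by
    simpa using card_le_of_hasBoxRep_fullSubdivision_top hrep
  have hclog : Nat.clog 2 (Nat.clog 2 n) ≤ 2 * G.boxicity - 1 :=
    (Nat.clog_le_iff_le_pow one_lt_two).mpr ((Nat.clog_le_iff_le_pow one_lt_two).mpr hcard)
  rw [div_le_iff₀ two_pos]
  exact_mod_cast (by omega : Nat.clog 2 (Nat.clog 2 n) + 1 ≤ G.boxicity * 2)
end

section
/- If G = ⋂_{i=1}^b I_i where each I_i is an interval graph containing the full subdivision of K_n as a spanning subgraph, and each I_i has an interval representation f_i with no two intervals sharing endpoints, then the 2b permutations of [n] given by the left endpoints and right endpoints of the intervals f_i(v_1), ..., f_i(v_n) form a simply 3-suitable set for [n]. -/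
/-- If the full subdivision of `K_n` is the intersection of `b` interval graphs, given by
interval representations `i ↦ [l i ·, r i ·]` in which no two intervals share an endpoint,
then the `2b` permutations of `[n]` induced by the left endpoints and the right endpoints
of the intervals of `v_1, …, v_n` form a simply 3-suitable set for `[n]`. -/
theorem simplySuitable_of_box_rep (n b : ℕ) (hn : 2 ≤ n)
    (l r : Fin b → (Fin n ⊕ (⊤ : SimpleGraph (Fin n)).edgeSet) → ℝ)
    (hlr : ∀ i v, l i v ≤ r i v)
    (hdist : ∀ i, ∀ u v, u ≠ v →
      l i u ≠ l i v ∧ r i u ≠ r i v ∧ l i u ≠ r i v ∧ r i u ≠ l i v)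
    (hG : ∀ u v, u ≠ v →
      ((fullSubdivision (⊤ : SimpleGraph (Fin n))).Adj u v ↔
        ∀ i, max (l i u) (l i v) ≤ min (r i u) (r i v)))
    (L R : Fin b → Equiv.Perm (Fin n))
    (hL : ∀ i, ∀ p q : Fin n,
      (L i).symm p < (L i).symm q ↔ l i (Sum.inl p) < l i (Sum.inl q))
    (hR : ∀ i, ∀ p q : Fin n,
      (R i).symm p < (R i).symm q ↔ r i (Sum.inl p) < r i (Sum.inl q)) :
    SimplySuitable {σ : Equiv.Perm (Fin n) | ∃ i, σ = L i ∨ σ = R i} := by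
  intro s t
  rw [Set.eq_empty_iff_forall_notMem]
  intro x hx
  simp only [Set.mem_iInter, Set.mem_setOf_eq] at hx
  -- b is positive, else all distinct vertices would be adjacent
  have hb : 0 < b := by
    rcases Nat.eq_zero_or_pos b with hb0 | hb0
    · subst hb0
      have hne : (Sum.inl ⟨0, by omega⟩ : Fin n ⊕ (⊤ : SimpleGraph (Fin n)).edgeSet) ≠
          Sum.inl ⟨1, by omega⟩ := by simp [Fin.ext_iff]
      have hadj := (hG _ _ hne).mpr (fun i => i.elim0)
      simp [fullSubdivision, SimpleGraph.fromRel_adj] at hadj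
    · exact hb0
  have hx0 := hx (L ⟨0, hb⟩) ⟨⟨0, hb⟩, Or.inl rfl⟩
  have hst : s ≠ t := by
    rintro rfl
    rcases hx0 with ⟨h1, h2⟩ | ⟨h1, h2⟩ <;> exact absurd (h1.trans h2) (lt_irrefl _)
  have hxs : x ≠ s := by
    rintro rfl
    rcases hx0 with ⟨h1, _⟩ | ⟨_, h1⟩ <;> exact absurd h1 (lt_irrefl _)
  have hxt : x ≠ t := by
    rintro rfl
    rcases hx0 with ⟨_, h1⟩ | ⟨h1, _⟩ <;> exact absurd h1 (lt_irrefl _)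
  -- the subdivision vertex for edge {s, t}
  have he : s(s, t) ∈ (⊤ : SimpleGraph (Fin n)).edgeSet := by
    rw [SimpleGraph.mem_edgeSet]; exact hst
  set u : Fin n ⊕ (⊤ : SimpleGraph (Fin n)).edgeSet := Sum.inr ⟨s(s, t), he⟩ with hu
  have hadj_s : (fullSubdivision (⊤ : SimpleGraph (Fin n))).Adj (Sum.inl s) u := by
    simp [fullSubdivision, SimpleGraph.fromRel_adj, hu]
  have hadj_t : (fullSubdivision (⊤ : SimpleGraph (Fin n))).Adj (Sum.inl t) u := by
    simp [fullSubdivision, SimpleGraph.fromRel_adj, hu]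
  have hnadj : ¬ (fullSubdivision (⊤ : SimpleGraph (Fin n))).Adj (Sum.inl x) u := by
    simp [fullSubdivision, SimpleGraph.fromRel_adj, hu, Sym2.mem_iff, hxs, hxt]
  have hS := (hG _ _ (by simp)).mp hadj_s
  have hT := (hG _ _ (by simp)).mp hadj_t
  have hX : ¬ ∀ i, max (l i (Sum.inl x)) (l i u) ≤ min (r i (Sum.inl x)) (r i u) :=
    fun h => hnadj ((hG _ _ (by simp)).mpr h)
  push_neg at hX
  obtain ⟨i, hi⟩ := hX
  -- disjointness: x's interval lies entirely left or entirely right of u's interval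
  have hdisj : r i (Sum.inl x) < l i u ∨ r i u < l i (Sum.inl x) := by
    by_contra h
    push_neg at h
    obtain ⟨h1, h2⟩ := h
    exact absurd (max_le (le_min (hlr i _) h2) (le_min h1 (hlr i _))) (not_le.mpr hi)
  rcases hdisj with hcase | hcase
  · -- x's interval is to the left: in R i, x precedes both s and t
    have hs' : r i (Sum.inl x) < r i (Sum.inl s) :=
      hcase.trans_le ((le_max_right _ _).trans ((hS i).trans (min_le_left _ _)))
    have ht' : r i (Sum.inl x) < r i (Sum.inl t) :=
      hcase.trans_le ((le_max_right _ _).trans ((hT i).trans (min_le_left _ _)))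
    have h1 := (hR i x s).mpr hs'
    have h2 := (hR i x t).mpr ht'
    rcases hx (R i) ⟨i, Or.inr rfl⟩ with ⟨h3, _⟩ | ⟨h3, _⟩
    · exact absurd h3 (not_lt.mpr h1.le)
    · exact absurd h3 (not_lt.mpr h2.le)
  · -- x's interval is to the right: in L i, x follows both s and t
    have hs' : l i (Sum.inl s) < l i (Sum.inl x) :=
      lt_of_le_of_lt ((le_max_left _ _).trans ((hS i).trans (min_le_right _ _))) hcase
    have ht' : l i (Sum.inl t) < l i (Sum.inl x) :=
      lt_of_le_of_lt ((le_max_left _ _).trans ((hT i).trans (min_le_right _ _))) hcase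
    have h1 := (hL i s x).mpr hs'
    have h2 := (hL i t x).mpr ht'
    rcases hx (L i) ⟨i, Or.inl rfl⟩ with ⟨_, h3⟩ | ⟨_, h3⟩
    · exact absurd h3 (not_lt.mpr h2.le)
    · exact absurd h3 (not_lt.mpr h1.le)
end

section
/- For any bipartite graph G with bipartition {A, B}, the graph C_A(G) obtained from G by adding all edges between pairs of distinct vertices of A satisfies box(C_A(G)) ≤ 2 · box(G). -/
lemma hasBoxRep_of_equiv {V ι : Type*} (G : SimpleGraph V) {k : ℕ} (e : ι ≃ Fin k)
    (l r : V → ι → ℝ) (h1 : ∀ v i, l v i ≤ r v i)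
    (h2 : ∀ u v : V, u ≠ v →
      (G.Adj u v ↔ ∀ i, max (l u i) (l v i) ≤ min (r u i) (r v i))) :
    G.HasBoxRep k := by
  refine ⟨fun v j => l v (e.symm j), fun v j => r v (e.symm j), fun v j => h1 v _, ?_⟩
  intro u v huv
  rw [h2 u v huv]
  exact ⟨fun h j => h _, fun h i => by simpa using h (e i)⟩

lemma exists_boxRep {V : Type*} [Finite V] (G : SimpleGraph V) :
    ∃ k, G.HasBoxRep k := by
  classical
  haveI : Fintype {p : V × V // p.1 ≠ p.2 ∧ ¬ G.Adj p.1 p.2} :=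
    Fintype.ofFinite _
  refine ⟨Fintype.card {p : V × V // p.1 ≠ p.2 ∧ ¬ G.Adj p.1 p.2},
    hasBoxRep_of_equiv G (Fintype.equivFin _)
    (fun v d => if v = d.1.1 then 0 else if v = d.1.2 then 1 else 0)
    (fun v d => if v = d.1.1 then 0 else 1) ?_ ?_⟩
  · intro v d; split_ifs <;> norm_num
  · intro x y hxy
    constructor
    · intro hadj d
      obtain ⟨⟨u, w⟩, hne, hnadj⟩ := d
      have hx1 : ¬(x = u ∧ y = w) := fun ⟨h1, h2⟩ => hnadj (h1 ▸ h2 ▸ hadj)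
      have hx2 : ¬(x = w ∧ y = u) := fun ⟨h1, h2⟩ => hnadj (h1 ▸ h2 ▸ hadj.symm)
      dsimp only
      split_ifs <;> norm_num <;> tauto
    · intro hall
      by_contra h
      have h2 := hall ⟨(x, y), hxy, h⟩
      dsimp only at h2
      norm_num [Ne.symm hxy] at h2

lemma hasBoxRep_clique_side {V : Type*} [Finite V] (G : SimpleGraph V) (A : Set V) {k : ℕ}
    (hG : G.HasBoxRep k) :
    (SimpleGraph.fromRel (fun u v => G.Adj u v ∨ (u ∈ A ∧ v ∈ A))).HasBoxRep (2 * k) := by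
  classical
  obtain ⟨l, r, hlr, hiff⟩ := hG
  obtain ⟨M, hM⟩ := Finite.exists_le (fun p : V × Fin k => max (l p.1 p.2) (r p.1 p.2))
  obtain ⟨m', hm'⟩ := Finite.exists_le (fun p : V × Fin k => -(l p.1 p.2))
  set m := -m' with hmdef
  have hml : ∀ v i, m ≤ l v i := fun v i => by
    have := hm' (v, i); dsimp only at this; simp only [hmdef]; linarith
  have hmr : ∀ v i, m ≤ r v i := fun v i => (hml v i).trans (hlr v i)
  have hMr : ∀ v i, r v i ≤ M := fun v i => le_trans (le_max_right _ _) (hM (v, i))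
  have hMl : ∀ v i, l v i ≤ M := fun v i => le_trans (le_max_left _ _) (hM (v, i))
  refine hasBoxRep_of_equiv _ (finSumFinEquiv.trans (finCongr (two_mul k).symm))
    (fun v j => Sum.elim (fun i => l v i) (fun i => if v ∈ A then m else l v i) j)
    (fun v j => Sum.elim (fun i => if v ∈ A then M else r v i) (fun i => r v i) j)
    ?_ ?_
  · rintro v (i | i) <;> dsimp only [Sum.elim_inl, Sum.elim_inr] <;> split_ifs <;>
      first | exact hlr v i | exact hMl v i | exact hmr v i
  · intro u v huv
    have hadj_iff : (SimpleGraph.fromRel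
        (fun u v => G.Adj u v ∨ (u ∈ A ∧ v ∈ A))).Adj u v ↔
        (G.Adj u v ∨ (u ∈ A ∧ v ∈ A)) := by
      rw [SimpleGraph.fromRel_adj]
      constructor
      · rintro ⟨-, (h | h) | (h | h)⟩
        · exact Or.inl h
        · exact Or.inr h
        · exact Or.inl h.symm
        · exact Or.inr ⟨h.2, h.1⟩
      · intro h; exact ⟨huv, Or.inl h⟩
    rw [hadj_iff]
    constructor
    · rintro (hadj | ⟨hu, hv⟩)
      · have hkey := (hiff u v huv).mp hadj
        rintro (i | i) <;> dsimp only [Sum.elim_inl, Sum.elim_inr] <;>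
          have luru : l u i ≤ r u i := le_trans le_sup_left ((hkey i).trans inf_le_left) <;>
          have lurv : l u i ≤ r v i := le_trans le_sup_left ((hkey i).trans inf_le_right) <;>
          have lvru : l v i ≤ r u i := le_trans le_sup_right ((hkey i).trans inf_le_left) <;>
          have lvrv : l v i ≤ r v i := le_trans le_sup_right ((hkey i).trans inf_le_right) <;>
          split_ifs <;>
          refine max_le (le_min ?_ ?_) (le_min ?_ ?_) <;>
          first | exact luru | exact lurv | exact lvru | exact lvrv |
            exact hMl u i | exact hMl v i | exact hmr u i | exact hmr v i |
            exact hml u i | exact hml v i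
      · rintro (i | i) <;> dsimp only [Sum.elim_inl, Sum.elim_inr] <;>
          rw [if_pos hu, if_pos hv] <;>
          refine max_le (le_min ?_ ?_) (le_min ?_ ?_) <;>
          first | exact hMl u i | exact hMl v i | exact hmr u i | exact hmr v i |
            exact le_refl _
    · intro hall
      by_cases hu : u ∈ A <;> by_cases hv : v ∈ A
      · exact Or.inr ⟨hu, hv⟩
      · refine Or.inl ((hiff u v huv).mpr fun i => ?_)
        have h1 := hall (Sum.inl i)
        have h2 := hall (Sum.inr i)
        dsimp only [Sum.elim_inl, Sum.elim_inr] at h1 h2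
        rw [if_pos hu, if_neg hv] at h1 h2
        refine max_le (le_min (hlr u i) ?_) (le_min ?_ (hlr v i))
        · exact le_trans (le_max_left _ _) (h1.trans (min_le_right _ _))
        · exact le_trans (le_max_right _ _) (h2.trans (min_le_left _ _))
      · refine Or.inl ((hiff u v huv).mpr fun i => ?_)
        have h1 := hall (Sum.inl i)
        have h2 := hall (Sum.inr i)
        dsimp only [Sum.elim_inl, Sum.elim_inr] at h1 h2
        rw [if_neg hu, if_pos hv] at h1 h2
        refine max_le (le_min (hlr u i) ?_) (le_min ?_ (hlr v i))
        · exact le_trans (le_max_left _ _) (h2.trans (min_le_right _ _))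
        · exact le_trans (le_max_right _ _) (h1.trans (min_le_left _ _))
      · refine Or.inl ((hiff u v huv).mpr fun i => ?_)
        have h1 := hall (Sum.inl i)
        dsimp only [Sum.elim_inl] at h1
        rw [if_neg hu, if_neg hv] at h1
        exact h1

/-- For a bipartite graph `G` with bipartition `{A, B}`, the graph `C_A(G)` obtained
from `G` by turning `A` into a clique satisfies `box(C_A(G)) ≤ 2 · box(G)`. -/
theorem boxicity_clique_on_side {V : Type*} [Fintype V] (G : SimpleGraph V)
    (A B : Set V) (hcover : A ∪ B = Set.univ) (hdisj : Disjoint A B)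
    (hbip : ∀ u v, G.Adj u v → (u ∈ A ∧ v ∈ B) ∨ (u ∈ B ∧ v ∈ A)) :
    (SimpleGraph.fromRel (fun u v => G.Adj u v ∨ (u ∈ A ∧ v ∈ A))).boxicity ≤
      2 * G.boxicity := by
  have hne : {k | G.HasBoxRep k}.Nonempty := exists_boxRep G
  have hG : G.HasBoxRep G.boxicity := Nat.sInf_mem hne
  exact Nat.sInf_le (hasBoxRep_clique_side G A hG)
end

section
/- Let G be a bipartite graph with bipartition {X, Y} such that every vertex y ∈ Y has degree at most 2, and no two distinct vertices of Y have the same neighbourhood. If Δ(G) ≥ 2, then box(G) ≤ ⌈log₂ log₂ Δ(G)⌉ + 3. -/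
/-!
Join `a` and `b` in a graph `H` on `V` whenever `{a, b}` is the neighbourhood of some `y ∈ Y`;
`H` has maximum degree at most `Δ(G)`. Suppose `f₁, …, f_k : V → ℝ` give distinct points
`(fᵢ v)ᵢ` and, for every edge `ab` of `H` and every other vertex `x`, some `fᵢ` puts `x` strictly
below or strictly above both `a` and `b`. Then `box(G) ≤ k + 1`: a vertex outside `Y` is the
point `(fᵢ x)ᵢ`, a vertex `y ∈ Y` is the bounding box of its at most two neighbours, and one more
coordinate separates the vertices of `Y` from each other.

If `Δ = 2`, two coordinates suffice, by induction: remove a vertex `w` with neighbours `a, b`,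
represent the rest with `b` on top of the second coordinate, then put `w` on top of the second
coordinate and right above `a` in the first. If `Δ ≥ 3`, colour `H` properly by the subsets of
`{0, …, m - 1}`, `m = ⌈log₂ Δ⌉ + 1`. Pick distinct nonempty sets `col j ⊆ {1, …, t + 1}`, which is
possible as `m < 2 ^ (t + 1)` for `t = ⌈log₂ log₂ Δ⌉`. Coordinate `i ∈ {0, …, t + 1}` compares
colours colexicographically after flipping the bits `j` with `i ∈ col j`, and breaks ties between
vertices of the same colour by a fixed injection into `ℕ`.
-/

open Finset Function

section OutsideSpan

variable {α β γ : Type*} [LinearOrder β] [LinearOrder γ]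

def OutsideSpan (f : α → β) (s : Set α) (x : α) : Prop :=
  (∀ c ∈ s, f x < f c) ∨ ∀ c ∈ s, f c < f x

variable {f : α → β} {s : Set α} {a b x : α}

theorem outsideSpan_pair :
    OutsideSpan f {a, b} x ↔ (f x < f a ∧ f x < f b) ∨ (f a < f x ∧ f b < f x) := by
  simp [OutsideSpan]

theorem outsideSpan_singleton : OutsideSpan f {a} x ↔ f x ≠ f a := by
  simp only [OutsideSpan, Set.mem_singleton_iff, forall_eq]
  exact lt_or_lt_iff_ne

theorem outsideSpan_empty : OutsideSpan f ∅ x := Or.inl fun _ h => h.elim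

theorem OutsideSpan.comp_strictMono {φ : β → γ} (h : OutsideSpan f s x) (hφ : StrictMono φ) :
    OutsideSpan (φ ∘ f) s x := by
  simpa only [OutsideSpan, comp_apply, hφ.lt_iff_lt] using h

end OutsideSpan

section Span

variable {V : Type*} {φ : V → ℝ} {s : Set V} {M : ℝ} {c x : V}

open Classical in
noncomputable def spanLower (φ : V → ℝ) (s : Set V) (M : ℝ) : ℝ :=
  if s.Nonempty then sInf (φ '' s) else M

open Classical in
noncomputable def spanUpper (φ : V → ℝ) (s : Set V) (M : ℝ) : ℝ :=
  if s.Nonempty then sSup (φ '' s) else M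

theorem spanLower_le (hs : s.Finite) (hc : c ∈ s) : spanLower φ s M ≤ φ c := by
  rw [spanLower, if_pos ⟨c, hc⟩]
  exact csInf_le (hs.image φ).bddBelow (Set.mem_image_of_mem φ hc)

theorem le_spanUpper (hs : s.Finite) (hc : c ∈ s) : φ c ≤ spanUpper φ s M := by
  rw [spanUpper, if_pos ⟨c, hc⟩]
  exact le_csSup (hs.image φ).bddAbove (Set.mem_image_of_mem φ hc)

theorem spanLower_le_spanUpper (hs : s.Finite) : spanLower φ s M ≤ spanUpper φ s M := by
  rcases s.eq_empty_or_nonempty with rfl | ⟨c, hc⟩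
  · simp [spanLower, spanUpper]
  · exact (spanLower_le hs hc).trans (le_spanUpper hs hc)

theorem OutsideSpan.notMem_Icc (h : OutsideSpan φ s x) (hs : s.Finite) (hM : φ x < M) :
    φ x ∉ Set.Icc (spanLower φ s M) (spanUpper φ s M) := by
  rintro ⟨hlo, hhi⟩
  rcases s.eq_empty_or_nonempty with rfl | hne
  · simp only [spanLower, Set.not_nonempty_empty, if_false] at hlo
    linarith
  rw [spanLower, if_pos hne] at hlo
  rw [spanUpper, if_pos hne] at hhi
  obtain ⟨c, hc, hlo'⟩ := (hne.image φ).csInf_mem (hs.image φ)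
  obtain ⟨d, hd, hhi'⟩ := (hne.image φ).csSup_mem (hs.image φ)
  rcases h with h | h
  · exact (h c hc).not_ge (hlo'.symm ▸ hlo)
  · exact (h d hd).not_ge (hhi'.symm ▸ hhi)

end Span

namespace SimpleGraph

section SeparatingFamily

variable {α ι β : Type*} [LinearOrder β] {H : SimpleGraph α}

structure IsSeparatingFamily (H : SimpleGraph α) (f : ι → α → β) : Prop where
  injective : Injective fun v i => f i v
  outsideSpan : ∀ ⦃a b x⦄, H.Adj a b → x ≠ a → x ≠ b → ∃ i, OutsideSpan (f i) {a, b} x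

theorem IsSeparatingFamily.comp_strictMono {γ : Type*} [LinearOrder γ] {f : ι → α → β}
    (hf : IsSeparatingFamily H f) {φ : β → γ} (hφ : StrictMono φ) :
    IsSeparatingFamily H fun i => φ ∘ f i :=
  ⟨fun _ _ huv => hf.injective <| funext fun i => hφ.injective (congrFun huv i),
    fun _ _ _ hab hxa hxb =>
      let ⟨i, hi⟩ := hf.outsideSpan hab hxa hxb
      ⟨i, hi.comp_strictMono hφ⟩⟩

theorem IsSeparatingFamily.exists_real [Countable β] {f : ι → α → β}
    (hf : IsSeparatingFamily H f) : ∃ g : ι → α → ℝ, IsSeparatingFamily H g :=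
  let ⟨φ⟩ := Order.embedding_from_countable_to_dense β ℝ
  ⟨_, hf.comp_strictMono φ.strictMono⟩

end SeparatingFamily

section BoxRep

variable {V ι : Type*} {G : SimpleGraph V} {Y : Set V}

theorem hasBoxRep_of_forall_le {k : ℕ} (l r : V → Fin k → ℝ) (hlr : ∀ v i, l v i ≤ r v i)
    (hadj : ∀ u v, u ≠ v → (G.Adj u v ↔ ∀ i, l u i ≤ r v i ∧ l v i ≤ r u i)) :
    G.HasBoxRep k := by
  refine ⟨l, r, hlr, fun u v huv => (hadj u v huv).trans (forall_congr' fun i => ?_)⟩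
  simp only [max_le_iff, le_min_iff, hlr, true_and, and_true]
  exact and_comm

theorem adj_iff_forall_mem_Icc_span [Finite V] {f : ι → V → ℝ} {M : ℝ} (hM : ∀ i v, f i v < M)
    {x y : V} (hout : ¬ G.Adj y x → ∃ i, OutsideSpan (f i) (G.neighborSet y) x) :
    G.Adj y x ↔ ∀ i, f i x ∈
      Set.Icc (spanLower (f i) (G.neighborSet y) M) (spanUpper (f i) (G.neighborSet y) M) := by
  refine ⟨fun hxy i => ⟨spanLower_le (Set.toFinite _) hxy, le_spanUpper (Set.toFinite _) hxy⟩,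
    fun h => ?_⟩
  by_contra hxy
  obtain ⟨i, hi⟩ := hout hxy
  exact OutsideSpan.notMem_Icc hi (Set.toFinite _) (hM i x) (h i)

theorem hasBoxRep_succ [Fintype V] {X : Set V} (hG : G.IsBipartiteWith X Y) {k : ℕ}
    (f : Fin k → V → ℝ) (hinj : Set.InjOn (fun v i => f i v) Yᶜ)
    (hout : ∀ y ∈ Y, ∀ x ∉ Y, ¬ G.Adj y x → ∃ i, OutsideSpan (f i) (G.neighborSet y) x) :
    G.HasBoxRep (k + 1) := by
  classical
  obtain ⟨M, hM⟩ : ∃ M, ∀ i v, f i v < M := by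
    obtain ⟨B, hB⟩ := (Set.finite_range fun p : Fin k × V => f p.1 p.2).bddAbove
    exact ⟨B + 1, fun i v => (hB ⟨(i, v), rfl⟩).trans_lt (lt_add_one B)⟩
  set τ : V → ℝ := fun v => Fintype.equivFin V v
  have hτ : ∀ v, 0 ≤ τ v ∧ τ v ≤ Fintype.card V := fun v =>
    ⟨Nat.cast_nonneg _, Nat.cast_le.2 (Fintype.equivFin V v).isLt.le⟩
  have hτinj : Injective τ := fun u v h =>
    (Fintype.equivFin V).injective (Fin.ext (Nat.cast_injective h))
  refine hasBoxRep_of_forall_le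
    (fun v => Fin.cons (if v ∈ Y then τ v else 0)
      fun i => if v ∈ Y then spanLower (f i) (G.neighborSet v) M else f i v)
    (fun v => Fin.cons (if v ∈ Y then τ v else Fintype.card V)
      fun i => if v ∈ Y then spanUpper (f i) (G.neighborSet v) M else f i v) ?_ ?_
  · intro v i
    refine Fin.cases ?_ (fun i => ?_) i <;> by_cases hv : v ∈ Y <;> simp [hv]
    exact spanLower_le_spanUpper (Set.toFinite _)
  intro u v huv
  simp only [Fin.forall_fin_succ, Fin.cons_zero, Fin.cons_succ]
  by_cases hu : u ∈ Y <;> by_cases hv : v ∈ Y <;> simp only [hu, hv, if_true, if_false]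
  · refine iff_of_false (fun h => ?_) fun h => huv (hτinj (le_antisymm h.1.1 h.1.2))
    exact Set.disjoint_left.1 hG.disjoint (hG.mem_of_mem_adj' hv h) hu
  · simp [adj_iff_forall_mem_Icc_span hM (hout u hu v hv), hτ]
  · simp [G.adj_comm u, adj_iff_forall_mem_Icc_span hM (hout v hv u hu), hτ, and_comm]
  · refine iff_of_false (fun h => ?_) fun h => huv (hinj hu hv (funext fun i => ?_))
    · rcases hG.mem_of_adj h with h | h
      exacts [hv h.2, hu h.1]
    · exact le_antisymm (h.2 i).1 (h.2 i).2

@[simps]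
def neighborPairGraph (G : SimpleGraph V) (Y : Set V) : SimpleGraph V where
  Adj a b := a ≠ b ∧ ∃ y ∈ Y, G.neighborSet y = {a, b}
  symm := ⟨fun _ _ ⟨hab, y, hy, h⟩ => ⟨hab.symm, y, hy, h.trans (Set.pair_comm _ _)⟩⟩
  loopless := ⟨fun _ h => h.1 rfl⟩

theorem ncard_neighborSet_eq_degree (G : SimpleGraph V) (v : V) [Fintype (G.neighborSet v)] :
    (G.neighborSet v).ncard = G.degree v := by
  rw [← card_neighborFinset_eq_degree, ← Set.ncard_coe_finset, coe_neighborFinset]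

theorem ncard_neighborSet_neighborPairGraph_le [Finite V] (v : V) :
    ((neighborPairGraph G Y).neighborSet v).ncard ≤ (G.neighborSet v).ncard := by
  choose! y hy using fun b (hb : (neighborPairGraph G Y).Adj v b) => hb.2
  refine Set.ncard_le_ncard_of_injOn y (fun b hb => ?_) (fun b hb b' hb' h => ?_)
  · have : v ∈ G.neighborSet (y b) := by rw [(hy b hb).2]; exact Set.mem_insert v _
    exact G.adj_symm this
  · have := (hy b hb).2.symm.trans (h ▸ (hy b' hb').2)
    rcases Set.pair_eq_pair_iff.1 this with ⟨-, h⟩ | ⟨h, -⟩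
    exacts [h, absurd h hb'.1]

theorem IsSeparatingFamily.exists_outsideSpan_neighborSet [Finite V] [Nonempty ι] {β : Type*}
    [LinearOrder β] {f : ι → V → β} (hf : IsSeparatingFamily (neighborPairGraph G Y) f)
    {x y : V} (hy : y ∈ Y) (hdeg : (G.neighborSet y).ncard ≤ 2) (hx : x ∉ G.neighborSet y) :
    ∃ i, OutsideSpan (f i) (G.neighborSet y) x := by
  interval_cases h : (G.neighborSet y).ncard
  · rw [(Set.ncard_eq_zero (Set.toFinite _)).1 h]
    exact ⟨Classical.arbitrary ι, outsideSpan_empty⟩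
  · obtain ⟨a, ha⟩ := Set.ncard_eq_one.1 h
    rw [ha] at hx ⊢
    obtain ⟨i, hi⟩ := Function.ne_iff.1 (hf.injective.ne hx)
    exact ⟨i, outsideSpan_singleton.2 hi⟩
  · obtain ⟨a, b, hab, hN⟩ := Set.ncard_eq_two.1 h
    rw [hN] at hx ⊢
    simp only [Set.mem_insert_iff, Set.mem_singleton_iff, not_or] at hx
    exact hf.outsideSpan ⟨hab, y, hy, hN⟩ hx.1 hx.2

end BoxRep

section DegreeTwo

variable {α : Type*} {H : SimpleGraph α}

theorem exists_forall_adj_eq_or_eq [Fintype α] [DecidableRel H.Adj] {v : α}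
    (h : H.degree v ≤ 2) : ∃ a b, ∀ c, H.Adj v c → c = a ∨ c = b := by
  classical
  rcases (H.neighborFinset v).eq_empty_or_nonempty with h0 | ⟨a, ha⟩
  · exact ⟨v, v, fun c hc => by simpa [h0] using (H.mem_neighborFinset v c).2 hc⟩
  have hcard : #((H.neighborFinset v).erase a) ≤ 1 := by
    rw [card_erase_of_mem ha, card_neighborFinset_eq_degree]
    omega
  have : Nonempty α := ⟨v⟩
  obtain ⟨b, hb⟩ := card_le_one_iff_subset_singleton.1 hcard
  refine ⟨a, b, fun c hc => or_iff_not_imp_left.2 fun hca => ?_⟩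
  exact mem_singleton.1 (hb (mem_erase.2 ⟨hca, (H.mem_neighborFinset v c).2 hc⟩))

structure IsSeparatingPairOn (H : SimpleGraph α) (S : Finset α) (f g : α → ℕ) : Prop where
  injOn : Set.InjOn f S
  outsideSpan : ∀ ⦃a b x⦄, a ∈ S → b ∈ S → x ∈ S → H.Adj a b → x ≠ a → x ≠ b →
    OutsideSpan f {a, b} x ∨ OutsideSpan g {a, b} x

theorem isSeparatingPairOn_empty (f g : α → ℕ) : IsSeparatingPairOn H ∅ f g :=
  ⟨by simp, by simp⟩

variable [DecidableEq α]

theorem injOn_update_two_mul {S : Finset α} {f : α → ℕ} (hf : Set.InjOn f S) {w : α}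
    (hw : w ∉ S) (q : ℕ) :
    Set.InjOn (update (fun x => 2 * f x) w (2 * q + 1)) ↑(insert w S) := by
  have h : ∀ x ∈ S, update (fun x => 2 * f x) w (2 * q + 1) x = 2 * f x := fun x hx =>
    update_of_ne (ne_of_mem_of_not_mem hx hw) _ _
  intro x hx y hy hxy
  simp only [coe_insert, Set.mem_insert_iff, mem_coe] at hx hy
  rcases hx with rfl | hx <;> rcases hy with rfl | hy
  · rfl
  · simp only [update_self, h y hy] at hxy; omega
  · simp only [update_self, h x hx] at hxy; omega
  · simp only [h x hx, h y hy] at hxy; exact hf hx hy (by omega)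

/-- `w` goes on top in `g` and, in `f`, right above the vertices with `f`-value `q`. -/
theorem IsSeparatingPairOn.insert {S : Finset α} {f g : α → ℕ} (h : IsSeparatingPairOn H S f g)
    {w : α} (hw : w ∉ S) {N q : ℕ} (hN : ∀ x ∈ S, g x < N)
    (hnbr : ∀ c ∈ S, H.Adj w c → f c = q ∨ ∀ x ∈ S, x ≠ c → g x < g c) :
    IsSeparatingPairOn H (insert w S) (update (fun x => 2 * f x) w (2 * q + 1))
      (update g w N) := by
  have hf : ∀ x ∈ S, update (fun x => 2 * f x) w (2 * q + 1) x = 2 * f x := fun x hx =>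
    update_of_ne (ne_of_mem_of_not_mem hx hw) _ _
  have hg : ∀ x ∈ S, update g w N x = g x := fun x hx =>
    update_of_ne (ne_of_mem_of_not_mem hx hw) _ _
  have edge : ∀ c ∈ S, ∀ x ∈ S, H.Adj w c → x ≠ c →
      OutsideSpan (update (fun x => 2 * f x) w (2 * q + 1)) {w, c} x ∨
        OutsideSpan (update g w N) {w, c} x := by
    intro c hc x hx hwc hxc
    simp only [outsideSpan_pair, update_self, hf c hc, hf x hx, hg c hc, hg x hx]
    rcases hnbr c hc hwc with rfl | htop
    · have := h.injOn.ne hx hc hxc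
      omega
    · exact Or.inr (Or.inl ⟨hN x hx, htop x hx hxc⟩)
  refine ⟨injOn_update_two_mul h.injOn hw q, fun a b x ha hb hx hab hxa hxb => ?_⟩
  rw [mem_insert] at ha hb hx
  rcases eq_or_ne x w with rfl | hxw
  · have ha := ha.resolve_left hxa.symm
    have hb := hb.resolve_left hxb.symm
    exact Or.inr (Or.inr (by simp [hg a ha, hg b hb, hN a ha, hN b hb]))
  replace hx := hx.resolve_left hxw
  rcases eq_or_ne a w with rfl | haw
  · exact edge b (hb.resolve_left hab.ne.symm) x hx hab hxb
  rcases eq_or_ne b w with rfl | hbw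
  · rw [Set.pair_comm]
    exact edge a (ha.resolve_left haw) x hx hab.symm hxa
  have ha := ha.resolve_left haw
  have hb := hb.resolve_left hbw
  have := h.outsideSpan ha hb hx hab hxa hxb
  simp only [outsideSpan_pair, hf a ha, hf b hb, hf x hx, hg a ha, hg b hb, hg x hx] at this ⊢
  omega

theorem exists_isSeparatingPairOn [Fintype α] [DecidableRel H.Adj] (hdeg : ∀ v, H.degree v ≤ 2)
    (S : Finset α) (w : α) :
    ∃ f g, IsSeparatingPairOn H S f g ∧ (w ∈ S → ∀ x ∈ S, x ≠ w → g x < g w) := by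
  induction S using Finset.strongInduction generalizing w with
  | H S ih =>
  have top : ∀ w ∈ S, ∃ f g, IsSeparatingPairOn H S f g ∧ ∀ x ∈ S, x ≠ w → g x < g w := by
    intro w hw
    obtain ⟨a, b, hab⟩ := exists_forall_adj_eq_or_eq (hdeg w)
    obtain ⟨f, g, hfg, hb⟩ := ih _ (erase_ssubset hw) b
    have hN : ∀ x ∈ S.erase w, g x < (S.erase w).sup g + 1 := fun x hx =>
      Nat.lt_succ_of_le (le_sup hx)
    have := hfg.insert (notMem_erase w S) hN (q := f a) fun c hc hwc =>
      (hab c hwc).imp (congrArg f) fun hcb => by subst hcb; exact hb hc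
    rw [insert_erase hw] at this
    refine ⟨_, _, this, fun x hx hxw => ?_⟩
    rw [update_self, update_of_ne hxw]
    exact hN x (mem_erase.2 ⟨hxw, hx⟩)
  by_cases hw : w ∈ S
  · obtain ⟨f, g, h, htop⟩ := top w hw
    exact ⟨f, g, h, fun _ => htop⟩
  rcases S.eq_empty_or_nonempty with rfl | ⟨v, hv⟩
  · exact ⟨0, 0, isSeparatingPairOn_empty 0 0, fun h => absurd h (notMem_empty w)⟩
  · obtain ⟨f, g, h, -⟩ := top v hv
    exact ⟨f, g, h, fun h => absurd h hw⟩

theorem exists_isSeparatingFamily_of_degree_le_two [Fintype α] [DecidableRel H.Adj]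
    (hdeg : ∀ v, H.degree v ≤ 2) : ∃ f : Fin 2 → α → ℝ, IsSeparatingFamily H f := by
  rcases isEmpty_or_nonempty α with hα | ⟨⟨w⟩⟩
  · exact ⟨0, fun u => isEmptyElim u, fun a => isEmptyElim a⟩
  obtain ⟨f, g, h, -⟩ := exists_isSeparatingPairOn hdeg univ w
  refine IsSeparatingFamily.exists_real (f := ![f, g])
    ⟨fun u v huv => h.injOn (mem_univ u) (mem_univ v) (congrFun huv 0),
      fun a b x hab hxa hxb => ?_⟩
  rcases h.outsideSpan (mem_univ a) (mem_univ b) (mem_univ x) hab hxa hxb with h | h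
  exacts [⟨0, h⟩, ⟨1, h⟩]

end DegreeTwo

end SimpleGraph

section FlipColex

open scoped symmDiff

theorem toColex_symmDiff_lt_toColex_symmDiff {κ : Type*} [LinearOrder κ] {s t : Finset κ}
    (hst : s ≠ t) (u : Finset κ) :
    toColex (s ∆ u) < toColex (t ∆ u) ↔ (s ∆ t).max' (symmDiff_nonempty.2 hst) ∈ t ∆ u := by
  have h : (s ∆ u) ∆ (t ∆ u) = s ∆ t := by
    rw [symmDiff_symmDiff_symmDiff_comm, symmDiff_self, symmDiff_bot]
  rw [Colex.toColex_lt_toColex_iff_max'_mem]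
  simp [h, hst, (symmDiff_left_injective u).eq_iff]

variable {m : ℕ} {ι : Type*} [DecidableEq ι] (col : Fin m → Finset ι)

def flipColex (i : ι) (c : Finset (Fin m)) : Colex (Finset (Fin m)) :=
  toColex (c ∆ ({j | i ∈ col j} : Finset (Fin m)))

theorem flipColex_lt_flipColex_iff {c c' : Finset (Fin m)} (h : c ≠ c') (i : ι) :
    flipColex col i c < flipColex col i c' ↔
      ((c ∆ c').max' (symmDiff_nonempty.2 h) ∈ c' ↔
        i ∉ col ((c ∆ c').max' (symmDiff_nonempty.2 h))) := by
  rw [flipColex, flipColex, toColex_symmDiff_lt_toColex_symmDiff h, mem_symmDiff]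
  simp only [mem_filter, mem_univ, true_and]
  generalize (c ∆ c').max' _ = δ
  tauto

variable {col} {i₀ : ι}

theorem exists_flipColex_lt (hcol : ∀ j, (col j).Nonempty) (h₀ : ∀ j, i₀ ∉ col j)
    {c c' : Finset (Fin m)} (h : c ≠ c') : ∃ i, flipColex col i c < flipColex col i c' := by
  simp_rw [flipColex_lt_flipColex_iff col h]
  by_cases hδ : (c ∆ c').max' (symmDiff_nonempty.2 h) ∈ c'
  · exact ⟨i₀, iff_of_true hδ (h₀ _)⟩
  · obtain ⟨i, hi⟩ := hcol ((c ∆ c').max' (symmDiff_nonempty.2 h))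
    exact ⟨i, iff_of_false hδ (not_not.2 hi)⟩

theorem exists_outsideSpan_flipColex (hcol : Injective col) (h₀ : ∀ j, i₀ ∉ col j)
    {a b x : Finset (Fin m)} (hxa : x ≠ a) (hxb : x ≠ b) :
    ∃ i, OutsideSpan (flipColex col i) {a, b} x := by
  set δa := (a ∆ x).max' (symmDiff_nonempty.2 hxa.symm)
  set δb := (b ∆ x).max' (symmDiff_nonempty.2 hxb.symm)
  -- `x` is above `a` in coordinate `i` iff `δa ∈ x` xor `i ∈ col δa`, and likewise for `b`.
  obtain ⟨i, hi⟩ : ∃ i, ((δa ∈ x ↔ i ∉ col δa) ↔ (δb ∈ x ↔ i ∉ col δb)) := by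
    by_cases hδ : δa = δb
    · exact ⟨i₀, by rw [hδ]⟩
    by_cases hx : δa ∈ x ↔ δb ∈ x
    · exact ⟨i₀, by simp [h₀, hx]⟩
    obtain ⟨i, hi⟩ := symmDiff_nonempty.2 (hcol.ne hδ)
    rw [mem_symmDiff] at hi
    exact ⟨i, by tauto⟩
  have hinj : ∀ {c}, c ≠ x → flipColex col i c ≠ flipColex col i x := fun hc h =>
    hc ((symmDiff_left_injective _) (toColex.injective h))
  rw [← flipColex_lt_flipColex_iff col hxa.symm, ← flipColex_lt_flipColex_iff col hxb.symm] at hi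
  refine ⟨i, outsideSpan_pair.2 ?_⟩
  by_cases ha : flipColex col i a < flipColex col i x
  · exact Or.inr ⟨ha, hi.1 ha⟩
  · exact Or.inl ⟨lt_of_le_of_ne (not_lt.1 ha) (hinj hxa.symm).symm, lt_of_le_of_ne
      (not_lt.1 (mt hi.2 ha)) (hinj hxb.symm).symm⟩

end FlipColex

namespace SimpleGraph

variable {α ι β γ C : Type*} [LinearOrder β] [LinearOrder γ] {H : SimpleGraph α}

theorem exists_coloring_of_degree_lt [Fintype α] [DecidableRel H.Adj] [Fintype C]
    (h : ∀ v, H.degree v < Fintype.card C) : Nonempty (H.Coloring C) := by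
  classical
  cases isEmpty_or_nonempty α with
  | inl _ => exact ⟨Coloring.mk isEmptyElim fun {v} => isEmptyElim v⟩
  | inr hα =>
  have : Nonempty C := Fintype.card_pos_iff.1 ((Nat.zero_le _).trans_lt (h hα.some))
  suffices ∀ S : Finset α, ∃ χ : α → C, ∀ a ∈ S, ∀ b ∈ S, H.Adj a b → χ a ≠ χ b by
    obtain ⟨χ, hχ⟩ := this univ
    exact ⟨Coloring.mk χ fun hab => hχ _ (mem_univ _) _ (mem_univ _) hab⟩
  intro S
  induction S using Finset.induction_on with
  | empty => exact ⟨fun _ => Classical.arbitrary C, by simp⟩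
  | insert w S hw ih =>
    obtain ⟨χ, hχ⟩ := ih
    have hsub : S.filter (H.Adj w) ⊆ H.neighborFinset w := fun c hc => by
      simpa using (mem_filter.1 hc).2
    have hcard : #((S.filter (H.Adj w)).image χ) < #(univ : Finset C) :=
      card_image_le.trans_lt <| (card_le_card hsub).trans_lt
        ((card_neighborFinset_eq_degree H w).trans_lt (h w))
    obtain ⟨c, -, hc⟩ := exists_mem_notMem_of_card_lt_card hcard
    refine ⟨update χ w c, fun a ha b hb hab => ?_⟩
    have hnew : ∀ b ∈ S, H.Adj w b → c ≠ χ b := fun b hb hwb h =>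
      hc (mem_image.2 ⟨b, mem_filter.2 ⟨hb, hwb⟩, h.symm⟩)
    rw [mem_insert] at ha hb
    rcases eq_or_ne a w with rfl | haw
    · have hbw : b ≠ a := hab.ne.symm
      simpa [hbw] using hnew b (hb.resolve_left hbw) hab
    rcases eq_or_ne b w with rfl | hbw
    · simpa [haw] using (hnew a (ha.resolve_left haw) hab.symm).symm
    · simpa [haw, hbw] using hχ a (ha.resolve_left haw) b (hb.resolve_left hbw) hab

theorem IsSeparatingFamily.of_coloring [Nonempty ι] (χ : H.Coloring C) {g : ι → C → β}
    (hlt : ∀ ⦃c c'⦄, c ≠ c' → ∃ i, g i c < g i c')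
    (hout : ∀ ⦃a b x⦄, a ≠ b → x ≠ a → x ≠ b → ∃ i, OutsideSpan (g i) {a, b} x)
    {τ : α → γ} (hτ : Injective τ) :
    IsSeparatingFamily H fun i v => toLex (g i (χ v), τ v) := by
  have tie : ∀ ⦃a b x⦄, χ a ≠ χ b → x ≠ a → χ x = χ a →
      ∃ i, OutsideSpan (fun v => toLex (g i (χ v), τ v)) {a, b} x := by
    intro a b x hab hxa hx
    simp_rw [outsideSpan_pair, Prod.Lex.toLex_lt_toLex, hx, lt_irrefl, false_or, true_and]
    rcases (hτ.ne hxa).lt_or_gt with h | h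
    · obtain ⟨i, hi⟩ := hlt hab
      exact ⟨i, Or.inl ⟨h, Or.inl hi⟩⟩
    · obtain ⟨i, hi⟩ := hlt hab.symm
      exact ⟨i, Or.inr ⟨h, Or.inl hi⟩⟩
  refine ⟨fun u v huv => hτ ?_, fun a b x hab hxa hxb => ?_⟩
  · exact (Prod.ext_iff.1 (toLex.injective (congrFun huv (Classical.arbitrary ι)))).2
  have hχ := χ.valid hab
  by_cases hxa' : χ x = χ a
  · exact tie hχ hxa hxa'
  by_cases hxb' : χ x = χ b
  · rw [Set.pair_comm]
    exact tie hχ.symm hxb hxb'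
  obtain ⟨i, hi⟩ := hout hχ hxa' hxb'
  refine ⟨i, outsideSpan_pair.2 ?_⟩
  simp only [Prod.Lex.toLex_lt_toLex]
  rcases outsideSpan_pair.1 hi with hi | hi
  exacts [Or.inl ⟨Or.inl hi.1, Or.inl hi.2⟩, Or.inr ⟨Or.inl hi.1, Or.inl hi.2⟩]

theorem exists_isSeparatingFamily_of_degree_lt [Fintype α] [DecidableRel H.Adj] {m t : ℕ}
    (hdeg : ∀ v, H.degree v < 2 ^ m) (hm : m < 2 ^ (t + 1)) :
    ∃ f : Fin (t + 2) → α → ℝ, IsSeparatingFamily H f := by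
  obtain ⟨χ⟩ := exists_coloring_of_degree_lt (C := Finset (Fin m)) (by simpa using hdeg)
  obtain ⟨e⟩ := Function.Embedding.nonempty_of_card_le
    (α := Fin m) (β := {S : Finset (Fin (t + 1)) // S ≠ ∅})
    (by simp [Fintype.card_subtype_compl]; omega)
  set col : Fin m → Finset (Fin (t + 2)) := fun j => (e j).1.map (Fin.succEmb _)
  have hcol : Injective col := fun j j' h =>
    e.injective (Subtype.ext (Finset.map_injective (Fin.succEmb _) h))
  have hne : ∀ j, (col j).Nonempty := fun j => (nonempty_iff_ne_empty.2 (e j).2).map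
  have h₀ : ∀ j, (0 : Fin (t + 2)) ∉ col j := by simp [col, Fin.succ_ne_zero]
  obtain ⟨τ, hτ⟩ := exists_injective_nat α
  have : Countable (Colex (Finset (Fin m)) ×ₗ ℕ) :=
    inferInstanceAs (Countable (Finset (Fin m) × ℕ))
  exact (IsSeparatingFamily.of_coloring χ (fun _ _ => exists_flipColex_lt hne h₀)
    (fun _ _ _ _ => exists_outsideSpan_flipColex hcol h₀) hτ).exists_real

end SimpleGraph

theorem clog_two_add_one_lt_two_pow {n : ℕ} (h : 2 < n) :
    Nat.clog 2 n + 1 < 2 ^ (Nat.clog 2 (Nat.clog 2 n) + 1) := by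
  have h1 : 1 < Nat.clog 2 n := (Nat.lt_clog_iff_pow_lt one_lt_two).2 h
  have h2 : 2 ≤ 2 ^ Nat.clog 2 (Nat.clog 2 n) :=
    Nat.le_self_pow (Nat.clog_pos one_lt_two h1).ne' 2
  have h3 := Nat.le_pow_clog one_lt_two (Nat.clog 2 n)
  rw [pow_succ]
  omega

open SimpleGraph in
theorem boxicity_special_bipartite_general {V : Type*} [Fintype V] (G : SimpleGraph V)
    (X Y : Set V) (hdisj : Disjoint X Y)
    (hbip : ∀ u v, G.Adj u v → (u ∈ X ∧ v ∈ Y) ∨ (u ∈ Y ∧ v ∈ X))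
    (hdeg : ∀ y ∈ Y, (G.neighborSet y).ncard ≤ 2)
    (Δ : ℕ) (hΔ : Δ = @SimpleGraph.maxDegree V G _ (Classical.decRel _))
    (h2 : 2 ≤ Δ) :
    G.boxicity ≤ Nat.clog 2 (Nat.clog 2 Δ) + 3 := by
  classical
  have hH : ∀ v, (G.neighborPairGraph Y).degree v ≤ Δ := fun v => by
    rw [← ncard_neighborSet_eq_degree, hΔ]
    exact (ncard_neighborSet_neighborPairGraph_le v).trans
      ((ncard_neighborSet_eq_degree G v).trans_le (G.degree_le_maxDegree v))
  have box : ∀ k, (∃ f : Fin (k + 1) → V → ℝ, (G.neighborPairGraph Y).IsSeparatingFamily f) →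
      G.boxicity ≤ k + 2 := by
    rintro k ⟨f, hf⟩
    exact Nat.sInf_le (hasBoxRep_succ ⟨hdisj, hbip⟩ f hf.injective.injOn fun y hy _ _ hxy =>
      hf.exists_outsideSpan_neighborSet hy (hdeg y hy) hxy)
  rcases h2.eq_or_lt with rfl | h3
  · exact box 1 (exists_isSeparatingFamily_of_degree_le_two hH)
  · refine box _ (exists_isSeparatingFamily_of_degree_lt (m := Nat.clog 2 Δ + 1)
      (fun v => (hH v).trans_lt ?_) (clog_two_add_one_lt_two_pow h3))
    exact (Nat.le_pow_clog one_lt_two Δ).trans_lt (Nat.pow_lt_pow_right one_lt_two (lt_add_one _))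

/-- Let `G` be bipartite with bipartition `{X, Y}` where every vertex of `Y` has degree at
most 2 and no two distinct vertices of `Y` have the same neighbourhood. If `Δ(G) ≥ 2`,
then `box(G) ≤ ⌈log₂ log₂ Δ(G)⌉ + 3`. -/
theorem boxicity_special_bipartite {V : Type*} [Fintype V] (G : SimpleGraph V)
    (X Y : Set V) (hcover : X ∪ Y = Set.univ) (hdisj : Disjoint X Y)
    (hbip : ∀ u v, G.Adj u v → (u ∈ X ∧ v ∈ Y) ∨ (u ∈ Y ∧ v ∈ X))
    (hdeg : ∀ y ∈ Y, (G.neighborSet y).ncard ≤ 2)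
    (hnbr : ∀ y₁ ∈ Y, ∀ y₂ ∈ Y, y₁ ≠ y₂ → G.neighborSet y₁ ≠ G.neighborSet y₂)
    (Δ : ℕ) (hΔ : Δ = @SimpleGraph.maxDegree V G _ (Classical.decRel _))
    (h2 : 2 ≤ Δ) :
    G.boxicity ≤ Nat.clog 2 (Nat.clog 2 Δ) + 3 :=
  boxicity_special_bipartite_general G X Y hdisj hbip hdeg Δ hΔ h2
end
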